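/- Let ℐ = (𝒩, {ℰ_i}, {f_i}) be an interconnected system containing a subsystem ℐ' = (𝒩', {ℰ'_i}, {f'_i}) with 𝒩' ⊆ 𝒩, whose dynamics are independent of the remaining agents: for every i ∈ 𝒩', ℰ_i ⊆ 𝒩', ℰ'_i = ℰ_i, and f_i(x_i, {x_j}_{j∈ℰ_i}, d_i) = f'_i(x_i, {x_j}_{j∈ℰ'_i}, d_i) for all admissible arguments. Suppose ℐ' admits certificates {V'_i}_{i∈𝒩'} satisfying, for class-𝒦_∞ functions α1, α2, ε ∈ (0,1), ψ ≥ 0, and nonnegative gains with row sums at most 1−ε: α1(|x|₂) ≤ V'_i(x) ≤ α2(|x|₂) and V'_i(f'_i(x_i, {x_j}_{j∈ℰ'_i}, d_i)) ≤ Σ_{j∈ℰ'_i∪{i}} γ_{i,j} V'_j(x_j) + ψ|d_i|₂; and suppose the remaining agents i ∈ 𝒩'' = 𝒩∖𝒩' admit certificates {V''_i} satisfying the same class-𝒦_∞ bounds and decremental inequalities V''_i(f_i(x_i, {x_j}_{j∈ℰ_i}, d_i)) ≤ Σ_{j∈ℰ_i∪{i}} γ_{i,j} V''_j(x_j) + ψ|d_i|₂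 with the gains for i ∈ 𝒩'' also having row sums at most 1−ε (where for j ∈ 𝒩' one sets V''_j := V'_j). Then the combined family V_i := V'_i for i ∈ 𝒩' and V_i := V''_i for i ∈ 𝒩'' is a vector sISS Lyapunov certificate for the full system ℐ, and hence ℐ is scalably input-to-state stable; i.e., ℐ is sISS decomposable. -/

import Mathlib

/-!
Since the subsystem is closed, for `i ∈ S` the glued family coincides with `V'` on all of
`insert i (nbr i)`, so the two certificates glue into one for the full system.

For the vector Lyapunov theorem, take the max-Lyapunov function `M k = maxᵢ Vᵢ (x k i)`.
The row-sum condition gives `M (k+1) ≤ (1 - ε) M k + ψ C`, hence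
`M k ≤ (1 - ε)^k M 0 + ψ C / ε`. Inverting `α₁` and using the weak triangle inequality
`α⁻¹ (a + b) ≤ α⁻¹ (2a) + α⁻¹ (2b)` splits this into a 𝒦ℒ and a 𝒦 term, with constants
independent of the number of agents.
-/

open scoped NNReal
open Filter

noncomputable section

/-- `ℝ^m` with the Euclidean norm. -/
abbrev Evec (m : ℕ) : Type := EuclideanSpace ℝ (Fin m)

/-- A class-𝒦 function: continuous, strictly increasing, vanishing at `0`. -/
def IsClassK (α : ℝ≥0 → ℝ≥0) : Prop :=
  Continuous α ∧ StrictMono α ∧ α 0 = 0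

/-- A class-𝒦∞ function: class 𝒦 and unbounded. -/
def IsClassKInfty (α : ℝ≥0 → ℝ≥0) : Prop :=
  IsClassK α ∧ Tendsto α atTop atTop

/-- A class-𝒦ℒ function. -/
def IsClassKL (β : ℝ≥0 → ℕ → ℝ≥0) : Prop :=
  (∀ k : ℕ, IsClassK fun s => β s k) ∧
    ∀ s : ℝ≥0, Tendsto (fun k => β s k) atTop (nhds 0)

open Topology Finset

namespace IsClassK

variable {α β : ℝ≥0 → ℝ≥0}

lemma comp (hα : IsClassK α) (hβ : IsClassK β) : IsClassK (α ∘ β) :=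
  ⟨hα.1.comp hβ.1, hα.2.1.comp hβ.2.1, by simp [hα.2.2, hβ.2.2]⟩

lemma const_mul (hα : IsClassK α) {c : ℝ≥0} (hc : 0 < c) : IsClassK fun s => c * α s :=
  ⟨continuous_const.mul hα.1, fun _ _ hst => mul_lt_mul_of_pos_left (hα.2.1 hst) hc,
    by simp [hα.2.2]⟩

end IsClassK

lemma isClassK_id : IsClassK id :=
  ⟨continuous_id, strictMono_id, rfl⟩

lemma OrderIso.isClassK (e : ℝ≥0 ≃o ℝ≥0) : IsClassK e :=
  ⟨e.continuous, e.strictMono, e.map_bot⟩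

namespace IsClassKInfty

variable {α : ℝ≥0 → ℝ≥0}

lemma surjective (hα : IsClassKInfty α) : Function.Surjective α := by
  intro y
  obtain ⟨z, hz⟩ := (hα.2.eventually_ge_atTop y).exists
  obtain ⟨w, -, hw⟩ := intermediate_value_Icc (zero_le : 0 ≤ z) hα.1.1.continuousOn
    ⟨hα.1.2.2.le.trans zero_le, hz⟩
  exact ⟨w, hw⟩

def orderIso (hα : IsClassKInfty α) : ℝ≥0 ≃o ℝ≥0 :=
  StrictMono.orderIsoOfSurjective α hα.1.2.1 hα.surjective

lemma le_orderIso_symm_of_le (hα : IsClassKInfty α) {a b : ℝ≥0} (h : α b ≤ a) :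
    b ≤ hα.orderIso.symm a :=
  hα.orderIso.le_symm_apply.2 h

end IsClassKInfty

lemma Monotone.map_add_le_map_two_mul_add_map_two_mul {g : ℝ≥0 → ℝ≥0} (hg : Monotone g)
    (a b : ℝ≥0) : g (a + b) ≤ g (2 * a) + g (2 * b) := by
  rcases le_total a b with h | h
  · exact (hg (by rw [two_mul]; exact add_le_add_left h b)).trans le_add_self
  · exact (hg (by rw [two_mul]; exact add_le_add_right h a)).trans le_self_add

lemma le_pow_mul_add_div_of_le_mul_add {u : ℕ → ℝ≥0} {ε b : ℝ≥0} (hε0 : ε ≠ 0) (hε1 : ε ≤ 1)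
    (h : ∀ k, u (k + 1) ≤ (1 - ε) * u k + b) (k : ℕ) : u k ≤ (1 - ε) ^ k * u 0 + b / ε := by
  have hfix : (1 - ε) * (b / ε) + b = b / ε := by
    nth_rewrite 2 [← div_mul_cancel₀ b hε0]
    rw [mul_comm (b / ε) ε, ← add_mul, tsub_add_cancel_of_le hε1, one_mul]
  induction k with
  | zero => simp
  | succ k ih =>
    calc u (k + 1) ≤ (1 - ε) * u k + b := h k
      _ ≤ (1 - ε) * ((1 - ε) ^ k * u 0 + b / ε) + b := by gcongr
      _ = (1 - ε) ^ (k + 1) * u 0 + ((1 - ε) * (b / ε) + b) := by ring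
      _ = (1 - ε) ^ (k + 1) * u 0 + b / ε := by rw [hfix]

section VectorLyapunov

variable {ι : Type} [Fintype ι] [DecidableEq ι] {n p : ι → ℕ} {nbr : ι → Finset ι}
  {f : ∀ i : ι, (∀ j : ι, Evec (n j)) → Evec (p i) → Evec (n i)}
  {ε ψ : ℝ≥0} {γ : ι → ι → ℝ≥0} {V : ∀ i : ι, Evec (n i) → ℝ≥0}

lemma sup_lyapunov_step_le
    (hsg : ∀ i : ι, ∑ j ∈ insert i (nbr i), γ i j ≤ 1 - ε)
    (hdec : ∀ (i : ι) (x : ∀ j : ι, Evec (n j)) (d : Evec (p i)),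
      V i (f i x d) ≤ ∑ j ∈ insert i (nbr i), γ i j * V j (x j) + ψ * ‖d‖₊)
    (x : ∀ j : ι, Evec (n j)) (d : ∀ i : ι, Evec (p i)) {C : ℝ≥0} (hC : ∀ i, ‖d i‖₊ ≤ C) :
    univ.sup (fun i => V i (f i x (d i))) ≤ (1 - ε) * univ.sup (fun i => V i (x i)) + ψ * C := by
  set M := univ.sup fun i => V i (x i)
  have hVM : ∀ j, V j (x j) ≤ M := fun j => le_sup (f := fun i => V i (x i)) (mem_univ j)
  refine Finset.sup_le fun i _ => ?_
  calc V i (f i x (d i))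
      ≤ ∑ j ∈ insert i (nbr i), γ i j * V j (x j) + ψ * ‖d i‖₊ := hdec i x (d i)
    _ ≤ ∑ j ∈ insert i (nbr i), γ i j * M + ψ * C := by
        gcongr with j
        · exact hVM j
        · exact hC i
    _ = (∑ j ∈ insert i (nbr i), γ i j) * M + ψ * C := by rw [sum_mul]
    _ ≤ (1 - ε) * M + ψ * C := by gcongr; exact hsg i

lemma isClassKL_orderIso_symm_geometric (e : ℝ≥0 ≃o ℝ≥0) {α : ℝ≥0 → ℝ≥0} (hα : IsClassK α)
    (hε0 : 0 < ε) (hε1 : ε < 1) :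
    IsClassKL fun s k => e.symm (2 * (1 - ε) ^ k * α s) := by
  refine ⟨fun k => e.symm.isClassK.comp (hα.const_mul ?_), fun s => ?_⟩
  · exact mul_pos two_pos (pow_pos (tsub_pos_of_lt hε1) k)
  have hpow := NNReal.tendsto_pow_atTop_nhds_zero_of_lt_one (tsub_lt_self one_pos hε0)
  have hlim : Tendsto (fun k => 2 * (1 - ε) ^ k * α s) atTop (𝓝 0) := by
    simpa using (hpow.const_mul 2).mul_const (α s)
  simpa [Function.comp_def, e.symm.isClassK.2.2] using (e.symm.continuous.tendsto 0).comp hlim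

theorem exists_sISS_bound_of_vector_lyapunov {α₁ α₂ : ℝ≥0 → ℝ≥0}
    (hε0 : 0 < ε) (hε1 : ε < 1) (hα₁ : IsClassKInfty α₁) (hα₂ : IsClassK α₂)
    (hsg : ∀ i : ι, ∑ j ∈ insert i (nbr i), γ i j ≤ 1 - ε)
    (hsandwich : ∀ (i : ι) (x : Evec (n i)), α₁ ‖x‖₊ ≤ V i x ∧ V i x ≤ α₂ ‖x‖₊)
    (hdec : ∀ (i : ι) (x : ∀ j : ι, Evec (n j)) (d : Evec (p i)),
      V i (f i x d) ≤ ∑ j ∈ insert i (nbr i), γ i j * V j (x j) + ψ * ‖d‖₊) :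
    ∃ β : ℝ≥0 → ℕ → ℝ≥0, ∃ μ : ℝ≥0 → ℝ≥0, IsClassKL β ∧ IsClassK μ ∧
      ∀ (x : ℕ → ∀ j : ι, Evec (n j)) (d : ℕ → ∀ i : ι, Evec (p i)),
        (∀ (k : ℕ) (i : ι), x (k + 1) i = f i (x k) (d k i)) →
        ∀ C : ℝ≥0, (∀ (k : ℕ) (i : ι), ‖d k i‖₊ ≤ C) →
        ∀ (k : ℕ) (i : ι),
          ‖x k i‖₊ ≤ β (univ.sup fun j => ‖x 0 j‖₊) k + μ C := by
  set e := hα₁.orderIso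
  -- the `+ 1` keeps `μ` strictly increasing when `ψ = 0`
  refine ⟨fun s k => e.symm (2 * (1 - ε) ^ k * α₂ s), fun C => e.symm ((2 * (ψ / ε) + 1) * C),
    isClassKL_orderIso_symm_geometric e hα₂ hε0 hε1,
    e.symm.isClassK.comp (isClassK_id.const_mul (by positivity)), ?_⟩
  intro x d hdyn C hC k i
  set M : ℕ → ℝ≥0 := fun k => univ.sup fun i => V i (x k i)
  have hM : ∀ k, M k ≤ (1 - ε) ^ k * M 0 + ψ * C / ε := by
    refine le_pow_mul_add_div_of_le_mul_add hε0.ne' hε1.le fun k => ?_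
    have hx : x (k + 1) = fun i => f i (x k) (d k i) := funext (hdyn k)
    simpa only [M, hx] using sup_lyapunov_step_le hsg hdec (x k) (d k) (hC k)
  set s := univ.sup fun j => ‖x 0 j‖₊
  have hM0 : M 0 ≤ α₂ s := Finset.sup_le fun j _ => (hsandwich j (x 0 j)).2.trans
    (hα₂.2.1.monotone (le_sup (f := fun j => ‖x 0 j‖₊) (mem_univ j)))
  have hα₁x : α₁ ‖x k i‖₊ ≤ (1 - ε) ^ k * α₂ s + ψ * C / ε :=
    calc α₁ ‖x k i‖₊ ≤ V i (x k i) := (hsandwich i (x k i)).1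
      _ ≤ M k := le_sup (f := fun i => V i (x k i)) (mem_univ i)
      _ ≤ (1 - ε) ^ k * M 0 + ψ * C / ε := hM k
      _ ≤ (1 - ε) ^ k * α₂ s + ψ * C / ε := by gcongr
  calc ‖x k i‖₊ ≤ e.symm ((1 - ε) ^ k * α₂ s + ψ * C / ε) := hα₁.le_orderIso_symm_of_le hα₁x
    _ ≤ e.symm (2 * ((1 - ε) ^ k * α₂ s)) + e.symm (2 * (ψ * C / ε)) :=
        e.symm.monotone.map_add_le_map_two_mul_add_map_two_mul _ _
    _ ≤ e.symm (2 * (1 - ε) ^ k * α₂ s) + e.symm ((2 * (ψ / ε) + 1) * C) := by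
        rw [← mul_assoc 2]
        refine add_le_add_right (e.symm.monotone ?_) _
        calc 2 * (ψ * C / ε) = 2 * (ψ / ε) * C := by rw [mul_div_right_comm, mul_assoc]
          _ ≤ (2 * (ψ / ε) + 1) * C := by gcongr; exact le_self_add

end VectorLyapunov

section Gluing

variable {ι : Type} [DecidableEq ι] {n p : ι → ℕ} {nbr : ι → Finset ι}
  {f : ∀ i : ι, (∀ j : ι, Evec (n j)) → Evec (p i) → Evec (n i)} {S : Finset ι}
  {ψ : ℝ≥0} {α₁ α₂ : ℝ≥0 → ℝ≥0} {γ : ι → ι → ℝ≥0} {V' V'' : ∀ i : ι, Evec (n i) → ℝ≥0}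

lemma piecewise_sandwich
    (hsandwich' : ∀ i ∈ S, ∀ x : Evec (n i), α₁ ‖x‖₊ ≤ V' i x ∧ V' i x ≤ α₂ ‖x‖₊)
    (hsandwich'' : ∀ i ∉ S, ∀ x : Evec (n i), α₁ ‖x‖₊ ≤ V'' i x ∧ V'' i x ≤ α₂ ‖x‖₊)
    (i : ι) (x : Evec (n i)) :
    α₁ ‖x‖₊ ≤ (if i ∈ S then V' i x else V'' i x) ∧
      (if i ∈ S then V' i x else V'' i x) ≤ α₂ ‖x‖₊ := by
  split_ifs with hi
  exacts [hsandwich' i hi x, hsandwich'' i hi x]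

lemma piecewise_decrement (hclosed : ∀ i ∈ S, nbr i ⊆ S)
    (hdec' : ∀ i ∈ S, ∀ (x : ∀ j : ι, Evec (n j)) (d : Evec (p i)),
      V' i (f i x d) ≤ ∑ j ∈ insert i (nbr i), γ i j * V' j (x j) + ψ * ‖d‖₊)
    (hdec'' : ∀ i ∉ S, ∀ (x : ∀ j : ι, Evec (n j)) (d : Evec (p i)),
      V'' i (f i x d) ≤
        ∑ j ∈ insert i (nbr i),
          γ i j * (if j ∈ S then V' j (x j) else V'' j (x j)) + ψ * ‖d‖₊)
    (i : ι) (x : ∀ j : ι, Evec (n j)) (d : Evec (p i)) :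
    (if i ∈ S then V' i (f i x d) else V'' i (f i x d)) ≤
      ∑ j ∈ insert i (nbr i),
        γ i j * (if j ∈ S then V' j (x j) else V'' j (x j)) + ψ * ‖d‖₊ := by
  split_ifs with hi
  · have hsub : insert i (nbr i) ⊆ S := insert_subset hi (hclosed i hi)
    rw [sum_congr rfl fun j hj => by rw [if_pos (hsub hj)]]
    exact hdec' i hi x d
  · exact hdec'' i hi x d

end Gluing

theorem sISS_decomposable_of_independent_subsystem_general
    {ι : Type} [Fintype ι] [DecidableEq ι]
    (n p : ι → ℕ) (nbr : ι → Finset ι)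
    (f : ∀ i : ι, (∀ j : ι, Evec (n j)) → Evec (p i) → Evec (n i))
    (S : Finset ι)
    -- the subsystem is closed: neighbors of subsystem agents stay in `S`
    (hclosed : ∀ i ∈ S, nbr i ⊆ S)
    (ε : ℝ≥0) (hε0 : 0 < ε) (hε1 : ε < 1) (ψ : ℝ≥0)
    (α₁ α₂ : ℝ≥0 → ℝ≥0) (hα₁ : IsClassKInfty α₁) (hα₂ : IsClassKInfty α₂)
    (γ : ι → ι → ℝ≥0)
    (hsg : ∀ i : ι, ∑ j ∈ insert i (nbr i), γ i j ≤ 1 - ε)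
    (V' V'' : ∀ i : ι, Evec (n i) → ℝ≥0)
    -- the already-verified certificate of the subsystem
    (hsandwich' : ∀ i ∈ S, ∀ x : Evec (n i), α₁ ‖x‖₊ ≤ V' i x ∧ V' i x ≤ α₂ ‖x‖₊)
    (hdec' : ∀ i ∈ S, ∀ (x : ∀ j : ι, Evec (n j)) (d : Evec (p i)),
      V' i (f i x d) ≤ ∑ j ∈ insert i (nbr i), γ i j * V' j (x j) + ψ * ‖d‖₊)
    -- certificates for the remaining agents `𝒩'' = 𝒩 \ 𝒩'`
    (hsandwich'' : ∀ i ∉ S, ∀ x : Evec (n i), α₁ ‖x‖₊ ≤ V'' i x ∧ V'' i x ≤ α₂ ‖x‖₊)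
    (hdec'' : ∀ i ∉ S, ∀ (x : ∀ j : ι, Evec (n j)) (d : Evec (p i)),
      V'' i (f i x d) ≤
        ∑ j ∈ insert i (nbr i),
          γ i j * (if j ∈ S then V' j (x j) else V'' j (x j)) + ψ * ‖d‖₊) :
    -- the combined family is a vector sISS Lyapunov certificate for the full system …
    ((∀ (i : ι) (x : Evec (n i)),
        α₁ ‖x‖₊ ≤ (if i ∈ S then V' i x else V'' i x) ∧
          (if i ∈ S then V' i x else V'' i x) ≤ α₂ ‖x‖₊) ∧
      (∀ (i : ι) (x : ∀ j : ι, Evec (n j)) (d : Evec (p i)),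
        (if i ∈ S then V' i (f i x d) else V'' i (f i x d)) ≤
          ∑ j ∈ insert i (nbr i),
            γ i j * (if j ∈ S then V' j (x j) else V'' j (x j)) + ψ * ‖d‖₊)) ∧
    -- … and hence the full system is scalably input-to-state stable
    (∃ β : ℝ≥0 → ℕ → ℝ≥0, ∃ μ : ℝ≥0 → ℝ≥0, IsClassKL β ∧ IsClassK μ ∧
      ∀ (x : ℕ → ∀ j : ι, Evec (n j)) (d : ℕ → ∀ i : ι, Evec (p i)),
        (∀ (k : ℕ) (i : ι), x (k + 1) i = f i (x k) (d k i)) →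
        ∀ C : ℝ≥0, (∀ (k : ℕ) (i : ι), ‖d k i‖₊ ≤ C) →
        ∀ (k : ℕ) (i : ι),
          ‖x k i‖₊ ≤ β (Finset.univ.sup fun j => ‖x 0 j‖₊) k + μ C) := by
  have hsandwich := piecewise_sandwich hsandwich' hsandwich''
  have hdec := piecewise_decrement hclosed hdec' hdec''
  exact ⟨⟨hsandwich, hdec⟩,
    exists_sISS_bound_of_vector_lyapunov hε0 hε1 hα₁ hα₂.1 hsg hsandwich hdec⟩

/-- **Sufficient condition for sISS decomposability.** Let `(ι, nbr, f)` be an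
interconnected system containing a subsystem on the agent set `S ⊆ ι` whose dynamics
are independent of the remaining agents: for `i ∈ S` we have `nbr i ⊆ S`, and `f i`
depends only on the states of `nbr i ∪ {i}`. If the subsystem is already verified
with certificates `V'` (class-𝒦∞ sandwich bounds, gain row sums at most `1 - ε`, and
the decremental inequality within the subsystem), and the remaining agents `i ∉ S`
admit certificates `V''` satisfying the analogous bounds and decremental inequalities
(where for `j ∈ S` one uses `V' j`), then the combined family (given by `V' i` for
`i ∈ S` and `V'' i` otherwise) is a vector sISS Lyapunov certificate for the full
system, and hence the full system is scalably input-to-state stable: the system is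
sISS decomposable. -/
theorem sISS_decomposable_of_independent_subsystem
    {ι : Type} [Fintype ι] [Nonempty ι] [DecidableEq ι]
    (n p : ι → ℕ) (nbr : ι → Finset ι)
    (f : ∀ i : ι, (∀ j : ι, Evec (n j)) → Evec (p i) → Evec (n i))
    (S : Finset ι)
    -- the subsystem is closed: neighbors of subsystem agents stay in `S`
    (hclosed : ∀ i ∈ S, nbr i ⊆ S)
    -- subsystem dynamics are independent of the remaining agents
    (hindep : ∀ i ∈ S, ∀ (x y : ∀ j : ι, Evec (n j)) (d : Evec (p i)),
      (∀ j ∈ insert i (nbr i), x j = y j) → f i x d = f i y d)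
    (ε : ℝ≥0) (hε0 : 0 < ε) (hε1 : ε < 1) (ψ : ℝ≥0)
    (α₁ α₂ : ℝ≥0 → ℝ≥0) (hα₁ : IsClassKInfty α₁) (hα₂ : IsClassKInfty α₂)
    (γ : ι → ι → ℝ≥0)
    (hsg : ∀ i : ι, ∑ j ∈ insert i (nbr i), γ i j ≤ 1 - ε)
    (V' V'' : ∀ i : ι, Evec (n i) → ℝ≥0)
    -- the already-verified certificate of the subsystem
    (hsandwich' : ∀ i ∈ S, ∀ x : Evec (n i), α₁ ‖x‖₊ ≤ V' i x ∧ V' i x ≤ α₂ ‖x‖₊)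
    (hdec' : ∀ i ∈ S, ∀ (x : ∀ j : ι, Evec (n j)) (d : Evec (p i)),
      V' i (f i x d) ≤ ∑ j ∈ insert i (nbr i), γ i j * V' j (x j) + ψ * ‖d‖₊)
    -- certificates for the remaining agents `𝒩'' = 𝒩 \ 𝒩'`
    (hsandwich'' : ∀ i ∉ S, ∀ x : Evec (n i), α₁ ‖x‖₊ ≤ V'' i x ∧ V'' i x ≤ α₂ ‖x‖₊)
    (hdec'' : ∀ i ∉ S, ∀ (x : ∀ j : ι, Evec (n j)) (d : Evec (p i)),
      V'' i (f i x d) ≤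
        ∑ j ∈ insert i (nbr i),
          γ i j * (if j ∈ S then V' j (x j) else V'' j (x j)) + ψ * ‖d‖₊) :
    -- the combined family is a vector sISS Lyapunov certificate for the full system …
    ((∀ (i : ι) (x : Evec (n i)),
        α₁ ‖x‖₊ ≤ (if i ∈ S then V' i x else V'' i x) ∧
          (if i ∈ S then V' i x else V'' i x) ≤ α₂ ‖x‖₊) ∧
      (∀ (i : ι) (x : ∀ j : ι, Evec (n j)) (d : Evec (p i)),
        (if i ∈ S then V' i (f i x d) else V'' i (f i x d)) ≤
          ∑ j ∈ insert i (nbr i),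
            γ i j * (if j ∈ S then V' j (x j) else V'' j (x j)) + ψ * ‖d‖₊)) ∧
    -- … and hence the full system is scalably input-to-state stable
    (∃ β : ℝ≥0 → ℕ → ℝ≥0, ∃ μ : ℝ≥0 → ℝ≥0, IsClassKL β ∧ IsClassK μ ∧
      ∀ (x : ℕ → ∀ j : ι, Evec (n j)) (d : ℕ → ∀ i : ι, Evec (p i)),
        (∀ (k : ℕ) (i : ι), x (k + 1) i = f i (x k) (d k i)) →
        ∀ C : ℝ≥0, (∀ (k : ℕ) (i : ι), ‖d k i‖₊ ≤ C) →
        ∀ (k : ℕ) (i : ι),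
          ‖x k i‖₊ ≤ β (Finset.univ.sup fun j => ‖x 0 j‖₊) k + μ C) :=
  sISS_decomposable_of_independent_subsystem_general n p nbr f S hclosed ε hε0 hε1 ψ α₁ α₂ hα₁ hα₂ γ
    hsg V' V'' hsandwich' hdec' hsandwich'' hdec''
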